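/- arXiv:2312.12690 — 2 statements merged into one kernel-verified Lean document; each statement's English description precedes it below -/
import Mathlib

section
/- Let m ≥ 0, L ≥ 1 and n be integers with n ≥ m+2, let x > 0 be a real number with n·x ≠ L, and let ω ∈ ℂ with ω ≠ 1. Then ∑_{s=0}^{m} g_s^{(n,L)}(x)·ω^s = ((x − L/n)/x) · [ q̂_m^{(n,L)}(x·ω | x)/(1−ω)² − (x·ω)^{m+1}·Γ(L+n+1)/((1−ω)·(1+x)·Γ(L+m+1)·Γ(n−m)) − ω^{m+1}·(L+m+1 − (n−m−1)·x)·q̂_m^{(n,L)}(x|x)/((1+x)·(1−ω)) − ω^{m+1}·q̂_m^{(n,L)}(x|x)/(1−ω)² ]. -/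
open Finset

noncomputable section

/-- `g_m^{(n,L)}(x)`. -/
def gP (n L m : ℕ) (x : ℝ) : ℝ :=
  ((x - (L : ℝ) / n) / x) *
      ∑ k ∈ Finset.range (m + 1), ((m : ℝ) + 1 - k) * (Nat.choose (L + n) (L + k) : ℝ) * x ^ k
    + ((L : ℝ) * ((m : ℝ) + 1) / ((n : ℝ) * x)) * (Nat.choose (L + n) L : ℝ)

/-- `q_N^{(n,L)}(y)` for a complex argument `y`. -/
def qSC (n L : ℝ) (N : ℕ) (y : ℂ) : ℂ :=
  ∑ k ∈ Finset.range (N + 1),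
    ((Real.Gamma (L + n + 1) /
        (Real.Gamma ((k : ℝ) + L + 1) * Real.Gamma (n + 1 - k)) : ℝ) : ℂ) * y ^ k

/-- `q̂_N^{(n,L)}(y|x)` for complex arguments. -/
def qhatC (n L : ℝ) (N : ℕ) (y x : ℂ) : ℂ :=
  qSC n L N y + (1 / ((n : ℂ) * x - (L : ℝ))) *
    ((Real.Gamma (L + n + 1) / (Real.Gamma (n + 1) * Real.Gamma L) : ℝ) : ℂ)

/-! The key observation is `g_s = ((x - L/n)/x) · ∑_{j ≤ s} q̂_j(x|x)`, so the left side is the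
generating function of the partial sums of `j ↦ q̂_j(x|x)`. Summation by parts, once for these partial
sums and once inside `q̂`, produces the terms with `(1 - ω)⁻²`; the remaining sum
`(1 + x) ∑_{j ≤ m} q̂_j(x|x)` telescopes thanks to `(n - k) C(L+n, L+k) = (L + k + 1) C(L+n, L+k+1)`,
leaving only boundary terms at `k = m`. -/

section PartialSums

variable {R : Type*} [CommRing R]

theorem sum_range_succ_sum_range_succ (f : ℕ → R) (s : ℕ) :
    ∑ j ∈ range (s + 1), ∑ k ∈ range (j + 1), f k
      = ∑ k ∈ range (s + 1), ((s : R) + 1 - k) * f k := by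
  induction s with
  | zero => simp
  | succ s ih =>
    have hcoef : ∀ k : ℕ, (((s + 1 : ℕ) : R) + 1 - k) * f k = ((s : R) + 1 - k) * f k + f k :=
      fun k => by push_cast; ring
    rw [sum_range_succ, ih]
    simp only [hcoef, sum_add_distrib, sum_range_succ _ (s + 1)]
    push_cast
    ring

theorem one_sub_mul_sum_partialSum_mul_pow (a : ℕ → R) (ω : R) (N : ℕ) :
    (1 - ω) * ∑ s ∈ range N, (∑ j ∈ range (s + 1), a j) * ω ^ s
      = ∑ s ∈ range N, a s * ω ^ s - ω ^ N * ∑ s ∈ range N, a s := by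
  induction N with
  | zero => simp
  | succ N ih =>
    rw [sum_range_succ, mul_add, ih]
    simp only [sum_range_succ]
    ring

def qhatGen (E : R) (b : ℕ → R) (N : ℕ) (y : R) : R :=
  E + ∑ k ∈ range (N + 1), b k * y ^ k

theorem qhatGen_succ (E : R) (b : ℕ → R) (N : ℕ) (y : R) :
    qhatGen E b (N + 1) y = qhatGen E b N y + b (N + 1) * y ^ (N + 1) := by
  rw [qhatGen, qhatGen, sum_range_succ, add_assoc]

theorem one_sub_mul_sum_qhatGen_mul_pow (E : R) (b : ℕ → R) (X ω : R) (m : ℕ) :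
    (1 - ω) * ∑ j ∈ range (m + 1), qhatGen E b j X * ω ^ j
      = qhatGen E b m (X * ω) - ω ^ (m + 1) * qhatGen E b m X := by
  have hgeom := mul_neg_geom_sum ω (m + 1)
  have habel := one_sub_mul_sum_partialSum_mul_pow (fun k => b k * X ^ k) ω (m + 1)
  simp only [qhatGen, add_mul, sum_add_distrib, mul_pow] at habel ⊢
  simp only [mul_assoc] at habel
  rw [← mul_sum]
  linear_combination E * hgeom + habel

theorem one_add_mul_sum_qhatGen {E X ℓ ν : R} {b : ℕ → R} (m : ℕ)
    (hrec : ∀ k < m, (ν - k) * b k = (ℓ + k + 1) * b (k + 1))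
    (hE : (ν * X - ℓ) * E = ℓ * b 0) :
    (1 + X) * ∑ j ∈ range (m + 1), qhatGen E b j X
      = X ^ (m + 1) * ((ν - m) * b m) + (ℓ + m + 1 - (ν - m - 1) * X) * qhatGen E b m X := by
  induction m with
  | zero => simp only [qhatGen, zero_add, sum_range_one]; push_cast; linear_combination hE
  | succ m ih =>
    rw [sum_range_succ, mul_add, ih fun k hk => hrec k (by omega), qhatGen_succ]
    push_cast
    linear_combination X ^ (m + 1) * hrec m (by omega)

end PartialSums

theorem sum_partialSum_qhatGen_mul_pow {K : Type*} [Field K] {E X ω ℓ ν : K} {b : ℕ → K}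
    (m : ℕ) (hrec : ∀ k < m, (ν - k) * b k = (ℓ + k + 1) * b (k + 1))
    (hE : (ν * X - ℓ) * E = ℓ * b 0) (hω : ω ≠ 1) (hX : 1 + X ≠ 0) :
    ∑ s ∈ range (m + 1), (∑ j ∈ range (s + 1), qhatGen E b j X) * ω ^ s
      = qhatGen E b m (X * ω) / (1 - ω) ^ 2
        - (X * ω) ^ (m + 1) * ((ν - m) * b m) / ((1 - ω) * (1 + X))
        - ω ^ (m + 1) * (ℓ + m + 1 - (ν - m - 1) * X) * qhatGen E b m X / ((1 + X) * (1 - ω))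
        - ω ^ (m + 1) * qhatGen E b m X / (1 - ω) ^ 2 := by
  have hω' : 1 - ω ≠ 0 := sub_ne_zero.mpr hω.symm
  have hpartial := one_sub_mul_sum_partialSum_mul_pow (fun j => qhatGen E b j X) ω (m + 1)
  have hgen := one_sub_mul_sum_qhatGen_mul_pow E b X ω m
  have hsum := one_add_mul_sum_qhatGen m hrec hE
  field_simp
  linear_combination (1 - ω) * (1 + X) * hpartial + (1 + X) * hgen - (1 - ω) * ω ^ (m + 1) * hsum

theorem sub_mul_choose_add_eq {R : Type*} [CommRing R] (L n k : ℕ) (hk : k ≤ n) :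
    ((n : R) - k) * (L + n).choose (L + k) = ((L : R) + k + 1) * (L + n).choose (L + k + 1) := by
  have h := Nat.choose_succ_right_eq (L + n) (L + k)
  rw [Nat.add_sub_add_left] at h
  have h' : (((L + n).choose (L + k + 1) * (L + k + 1) : ℕ) : R)
      = (((L + n).choose (L + k) * (n - k) : ℕ) : R) := congrArg _ h
  push_cast [Nat.cast_sub hk] at h'
  linear_combination -h'

theorem Gamma_div_Gamma_mul_Gamma_eq_choose (L n k : ℕ) :
    Real.Gamma ((L : ℝ) + n + 1) / (Real.Gamma ((k : ℝ) + L + 1) * Real.Gamma ((n : ℝ) + 1 - k))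
      = ((L + n).choose (L + k) : ℝ) := by
  rcases le_or_gt k n with hk | hk
  · obtain ⟨d, rfl⟩ := Nat.exists_eq_add_of_le hk
    rw [Nat.cast_choose ℝ (by omega), Nat.add_sub_add_left, Nat.add_sub_cancel_left,
      ← Real.Gamma_nat_eq_factorial, ← Real.Gamma_nat_eq_factorial, ← Real.Gamma_nat_eq_factorial]
    push_cast
    ring_nf
  -- For `k > n` the factor `Γ(n + 1 - k)` sits at a pole, where `Real.Gamma` is `0`.
  · have h : (n : ℝ) + 1 - k = -((k - n - 1 : ℕ) : ℝ) := by
      rw [Nat.cast_sub (by omega), Nat.cast_sub (by omega)]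
      ring
    rw [h, Real.Gamma_neg_nat_eq_zero, mul_zero, div_zero,
      Nat.choose_eq_zero_of_lt (by omega), Nat.cast_zero]

theorem Gamma_div_Gamma_mul_Gamma_eq_mul_choose (L n : ℕ) (hL : L ≠ 0) :
    Real.Gamma ((L : ℝ) + n + 1) / (Real.Gamma ((n : ℝ) + 1) * Real.Gamma L)
      = L * ((L + n).choose L : ℝ) := by
  have h := Gamma_div_Gamma_mul_Gamma_eq_choose L n 0
  have hL' : (L : ℝ) ≠ 0 := Nat.cast_ne_zero.mpr hL
  simp only [Nat.cast_zero, zero_add, sub_zero, add_zero, Real.Gamma_add_one hL'] at h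
  rw [← h]
  field_simp

theorem Gamma_eq_sub_mul_choose_mul_Gamma_mul_Gamma (L n m : ℕ) (hm : m < n) :
    Real.Gamma ((L : ℝ) + n + 1)
      = ((n : ℝ) - m) * (L + n).choose (L + m)
        * (Real.Gamma ((L : ℝ) + m + 1) * Real.Gamma ((n : ℝ) - m)) := by
  have h := Gamma_div_Gamma_mul_Gamma_eq_choose L n m
  have hnm : (n : ℝ) - m ≠ 0 := sub_ne_zero.mpr (by exact_mod_cast hm.ne')
  have hΓ : Real.Gamma ((n : ℝ) - m) ≠ 0 := (Real.Gamma_pos_of_pos (by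
    have : (m : ℝ) < n := by exact_mod_cast hm
    linarith)).ne'
  rw [add_comm (m : ℝ), show (n : ℝ) + 1 - m = (n - m) + 1 by ring, Real.Gamma_add_one hnm] at h
  rw [← h]
  field_simp

theorem qhatC_eq_qhatGen (L n N : ℕ) (hL : L ≠ 0) (y x : ℂ) :
    qhatC n L N y x
      = qhatGen ((L : ℂ) * (L + n).choose L / (n * x - L)) (fun k => ((L + n).choose (L + k) : ℂ))
          N y := by
  simp only [qhatC, qSC, qhatGen, Gamma_div_Gamma_mul_Gamma_eq_choose,
    Gamma_div_Gamma_mul_Gamma_eq_mul_choose L n hL]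
  push_cast
  ring

theorem gP_eq_mul_sum_qhatC {n L : ℕ} {x : ℝ} (hn : n ≠ 0) (hL : L ≠ 0)
    (hxL : (n : ℝ) * x ≠ L) (s : ℕ) :
    ((gP n L s x : ℝ) : ℂ) = (((x - L / n) / x : ℝ) : ℂ) * ∑ j ∈ range (s + 1), qhatC n L j x x := by
  have hxL' : (x : ℂ) * n - L ≠ 0 := sub_ne_zero.mpr (by rw [mul_comm]; exact_mod_cast hxL)
  simp only [qhatC_eq_qhatGen L n _ hL, qhatGen, sum_add_distrib, sum_const, card_range,
    nsmul_eq_mul, sum_range_succ_sum_range_succ, gP]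
  push_cast
  field_simp
  ring

/-- Closed form of the generating sum `α_m^{(n,L)}(x,ω) = ∑_{s=0}^m g_s^{(n,L)}(x) ω^s`. -/
theorem alpha_closed_form (m L n : ℕ) (hL : 1 ≤ L) (hn : m + 2 ≤ n)
    (x : ℝ) (hx : 0 < x) (hxL : (n : ℝ) * x ≠ L) (ω : ℂ) (hω : ω ≠ 1) :
    (∑ s ∈ Finset.range (m + 1), ((gP n L s x : ℝ) : ℂ) * ω ^ s)
      = (((x - (L : ℝ) / n) / x : ℝ) : ℂ) *
        (qhatC n L m ((x : ℂ) * ω) (x : ℂ) / (1 - ω) ^ 2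
          - ((x : ℂ) * ω) ^ (m + 1) * ((Real.Gamma ((L : ℝ) + n + 1) : ℝ) : ℂ) /
              ((1 - ω) * (1 + (x : ℂ)) *
                ((Real.Gamma ((L : ℝ) + m + 1) * Real.Gamma ((n : ℝ) - m) : ℝ) : ℂ))
          - ω ^ (m + 1) * (((L : ℂ) + m + 1) - ((n : ℂ) - m - 1) * (x : ℂ)) *
              qhatC n L m (x : ℂ) (x : ℂ) / ((1 + (x : ℂ)) * (1 - ω))
          - ω ^ (m + 1) * qhatC n L m (x : ℂ) (x : ℂ) / (1 - ω) ^ 2) := by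
  have hL0 : L ≠ 0 := by omega
  have hX : (1 : ℂ) + x ≠ 0 := by exact_mod_cast (by positivity : (1 : ℝ) + x ≠ 0)
  have hxL' : (n : ℂ) * x - L ≠ 0 := sub_ne_zero.mpr (by exact_mod_cast hxL)
  have hΓ₁ : (Real.Gamma ((L : ℝ) + m + 1) : ℂ) ≠ 0 :=
    Complex.ofReal_ne_zero.mpr (Real.Gamma_pos_of_pos (by positivity)).ne'
  have hΓ₂ : (Real.Gamma ((n : ℝ) - m) : ℂ) ≠ 0 := by
    have : (m : ℝ) < n := by exact_mod_cast (by omega : m < n)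
    exact Complex.ofReal_ne_zero.mpr (Real.Gamma_pos_of_pos (by linarith)).ne'
  simp only [gP_eq_mul_sum_qhatC (by omega : n ≠ 0) hL0 hxL, mul_assoc, ← mul_sum,
    qhatC_eq_qhatGen L n _ hL0, Gamma_eq_sub_mul_choose_mul_Gamma_mul_Gamma L n m (by omega)]
  congr 1
  rw [sum_partialSum_qhatGen_mul_pow m (fun k hk => sub_mul_choose_add_eq L n k (by omega))
    (by simp [mul_div_cancel₀ _ hxL']) hω hX]
  push_cast
  field_simp
end
end

section
/- Let L > 0 and b > 0 be real numbers, and let s, t, χ be positive real numbers with χ² ≠ L. For each positive integer N set n_N = (b+1)·N, δ_N = (n_N + L + 1)/N, z_N = s/√(N·δ_N), w_N = t/√(N·δ_N), λ_N = χ/√(N·δ_N). Then lim_{N→∞} q̂_{N−1}^{(n_N,L)}(z_N·w_N | λ_N²) · (z_N·w_N)^{L} · ((1+z_N²)(1+w_N²))^{−(n_N+L+1)/2} = (1/(χ² − L)) · (s·t)^L · ( (χ²−L)·E_{1,L+1}(s·t) + 1/Γ(L) ) · e^{−(s²+t²)/2}, where all powers with real exponents are real powers. -/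
/-!
Put `M = n + L + 1`. After the rescaling `z w = s t / M`, the `k`-th term of `q̂ · (z w)^L` is
`(s t)^(k+L) / Γ(k+L+1)` times `Γ(M) / (Γ(M-L-k) M^(L+k))`. Log-convexity of `Γ` squeezes this
factor between `((M-L-k-1)/M)^(L+k)` and `1`, so dominated convergence turns the truncated sum
into the Mittag-Leffler series. The pole term tends to `1/((χ²-L) Γ(L))`, and the weight
`(1 + u/M)^(-M/2)` tends to `exp(-u/2)`.
-/

open Finset Filter

noncomputable section

/-- `q_N^{(n,L)}(y)`. -/
def qS (n L : ℝ) (N : ℕ) (y : ℝ) : ℝ :=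
  ∑ k ∈ Finset.range (N + 1),
    Real.Gamma (L + n + 1) / (Real.Gamma ((k : ℝ) + L + 1) * Real.Gamma (n + 1 - k)) * y ^ k

/-- `q̂_N^{(n,L)}(y|x)`. -/
def qhat (n L : ℝ) (N : ℕ) (y x : ℝ) : ℝ :=
  qS n L N y + (1 / (n * x - L)) * (Real.Gamma (L + n + 1) / (Real.Gamma (n + 1) * Real.Gamma L))

/-- The two-parametric Mittag-Leffler function `E_{1,β}(y)` with first parameter `1`. -/
def mittagLeffler1 (β : ℝ) (y : ℝ) : ℝ := ∑' k : ℕ, y ^ k / Real.Gamma ((k : ℝ) + β)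

open Topology

namespace Real

lemma log_Gamma_add_one_sub_log_Gamma {x : ℝ} (hx : 0 < x) :
    log (Gamma (x + 1)) - log (Gamma x) = log x := by
  rw [Gamma_add_one hx.ne', log_mul hx.ne' (Gamma_pos_of_pos hx).ne', add_sub_cancel_right]

lemma Gamma_add_le_Gamma_mul_rpow {x a : ℝ} (hx : 0 < x) (ha : 0 < a) :
    Gamma (x + a) ≤ Gamma x * (x + a) ^ a := by
  have hxa : 0 < x + a := by linarith
  have slope := convexOn_log_Gamma.slope_mono_adjacent (Set.mem_Ioi.2 hx)
    (Set.mem_Ioi.2 (by linarith : 0 < x + a + 1)) (by linarith : x < x + a) (lt_add_one _)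
  simp only [Function.comp_apply, add_sub_cancel_left, div_one,
    log_Gamma_add_one_sub_log_Gamma hxa, div_le_iff₀ ha] at slope
  rw [← log_le_log_iff (Gamma_pos_of_pos hxa) (by positivity),
    log_mul (Gamma_pos_of_pos hx).ne' (by positivity), log_rpow hxa]
  linarith

lemma Gamma_mul_rpow_le_Gamma_add {x a : ℝ} (hx : 1 < x) (ha : 0 < a) :
    Gamma x * (x - 1) ^ a ≤ Gamma (x + a) := by
  have hx1 : 0 < x - 1 := by linarith
  have slope := convexOn_log_Gamma.slope_mono_adjacent (Set.mem_Ioi.2 hx1)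
    (Set.mem_Ioi.2 (by linarith : 0 < x + a)) (by linarith : x - 1 < x) (by linarith : x < x + a)
  have hΓ := log_Gamma_add_one_sub_log_Gamma hx1
  rw [sub_add_cancel] at hΓ
  simp only [Function.comp_apply, sub_sub_cancel, div_one, add_sub_cancel_left, hΓ,
    le_div_iff₀ ha] at slope
  rw [← log_le_log_iff (by positivity) (Gamma_pos_of_pos (by linarith)),
    log_mul (Gamma_pos_of_pos (by linarith)).ne' (by positivity), log_rpow hx1]
  linarith

end Real

lemma tendsto_add_div_add_atTop (a b : ℝ) :
    Tendsto (fun x : ℝ => (x + a) / (x + b)) atTop (𝓝 1) := by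
  have h : Tendsto (fun x : ℝ => 1 + (a - b) / (x + b)) atTop (𝓝 (1 + 0)) :=
    tendsto_const_nhds.add <|
      tendsto_const_nhds.div_atTop (tendsto_atTop_add_const_right _ b tendsto_id)
  rw [add_zero] at h
  refine h.congr' ?_
  filter_upwards [eventually_gt_atTop (-b)] with x hx
  have : x + b ≠ 0 := by linarith
  field_simp
  ring

/-- Wendel's ratio, normalized by `(x + a)^a` instead of `x^a` so that it is bounded by `1`. -/
def gammaRatio (x a : ℝ) : ℝ := Real.Gamma (x + a) / (Real.Gamma x * (x + a) ^ a)

lemma gammaRatio_nonneg {x a : ℝ} (hx : 0 < x) (ha : 0 < a) : 0 ≤ gammaRatio x a := by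
  have := Real.Gamma_pos_of_pos hx
  have := Real.Gamma_pos_of_pos (add_pos hx ha)
  unfold gammaRatio
  positivity

lemma gammaRatio_le_one {x a : ℝ} (hx : 0 < x) (ha : 0 < a) : gammaRatio x a ≤ 1 := by
  have := Real.Gamma_pos_of_pos hx
  rw [gammaRatio, div_le_one (by positivity)]
  exact Real.Gamma_add_le_Gamma_mul_rpow hx ha

lemma tendsto_gammaRatio_atTop {a : ℝ} (ha : 0 < a) :
    Tendsto (fun x => gammaRatio x a) atTop (𝓝 1) := by
  have h_lower : Tendsto (fun x : ℝ => ((x + -1) / (x + a)) ^ a) atTop (𝓝 1) := by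
    simpa using (tendsto_add_div_add_atTop (-1) a).rpow_const (Or.inr ha.le)
  refine tendsto_of_tendsto_of_tendsto_of_le_of_le' h_lower tendsto_const_nhds ?_ ?_
  · filter_upwards [eventually_gt_atTop 1] with x hx
    have hΓ := Real.Gamma_pos_of_pos (by linarith : 0 < x)
    rw [← sub_eq_add_neg, Real.div_rpow (by linarith) (by linarith), gammaRatio,
      div_le_div_iff₀ (by positivity) (by positivity), ← mul_assoc, mul_comm ((x - 1) ^ a)]
    exact mul_le_mul_of_nonneg_right (Real.Gamma_mul_rpow_le_Gamma_add hx ha) (by positivity)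
  · filter_upwards [eventually_gt_atTop 0] with x hx
    exact gammaRatio_le_one hx ha

lemma tendsto_sum_range_mul_of_tendsto_one {g : ℕ → ℝ} (hg : Summable fun k => ‖g k‖)
    {c : ℕ → ℕ → ℝ} (hc : ∀ k, Tendsto (c · k) atTop (𝓝 1))
    (hc_le : ∀ᶠ N in atTop, ∀ k < N, ‖c N k‖ ≤ 1) :
    Tendsto (fun N => ∑ k ∈ range N, c N k * g k) atTop (𝓝 (∑' k, g k)) := by
  let f : ℕ → ℕ → ℝ := fun N k => if k < N then c N k * g k else 0
  have hf : ∀ N, ∑' k, f N k = ∑ k ∈ range N, c N k * g k := fun N =>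
    (tsum_eq_sum fun k hk => if_neg (by simpa using hk)).trans
      (sum_congr rfl fun k hk => if_pos (mem_range.1 hk))
  simp_rw [← hf]
  refine tendsto_tsum_of_dominated_convergence hg (fun k => ?_) ?_
  · have h := (hc k).mul_const (g k)
    rw [one_mul] at h
    refine h.congr' ?_
    filter_upwards [eventually_gt_atTop k] with N hN
    exact (if_pos hN).symm
  · filter_upwards [hc_le] with N hN k
    by_cases hk : k < N
    · simpa only [f, if_pos hk, norm_mul] using
        mul_le_of_le_one_left (norm_nonneg _) (hN k hk)
    · simp [f, if_neg hk]

lemma summable_norm_pow_div_Gamma (β y : ℝ) :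
    Summable fun k : ℕ => ‖y ^ k / Real.Gamma (k + β)‖ := by
  refine summable_of_ratio_norm_eventually_le (r := 1 / 2) (by norm_num) ?_
  filter_upwards [tendsto_natCast_atTop_atTop.eventually_ge_atTop (2 * |y| + 1 - β)] with k hk
  have hkβ : 0 < (k : ℝ) + β := by linarith [abs_nonneg y]
  have hΓ : Real.Gamma ((k + 1 : ℕ) + β) = (k + β) * Real.Gamma (k + β) := by
    rw [Nat.cast_succ, add_right_comm, Real.Gamma_add_one hkβ.ne']
  have hΓ_pos := Real.Gamma_pos_of_pos hkβ
  have h_succ : y ^ (k + 1) / Real.Gamma ((k + 1 : ℕ) + β) =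
      y / (k + β) * (y ^ k / Real.Gamma (k + β)) := by
    rw [hΓ, pow_succ]
    field_simp
  rw [norm_norm, norm_norm, h_succ, norm_mul]
  gcongr
  rw [norm_div, Real.norm_of_nonneg hkβ.le, Real.norm_eq_abs, div_le_iff₀ hkβ]
  linarith

lemma tendsto_sum_range_gammaRatio_mul {L b : ℝ} (hL : 0 < L) (hb : 0 ≤ b) (y : ℝ) :
    Tendsto (fun N : ℕ => ∑ k ∈ range N,
        gammaRatio ((b + 1) * N + 1 - k) (L + k) * (y ^ k / Real.Gamma (k + (L + 1))))
      atTop (𝓝 (mittagLeffler1 (L + 1) y)) := by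
  refine tendsto_sum_range_mul_of_tendsto_one (summable_norm_pow_div_Gamma _ y) (fun k => ?_) ?_
  · have hx : Tendsto (fun N : ℕ => (b + 1) * (N : ℝ) + 1 - k) atTop atTop := by
      simp_rw [add_sub_assoc]
      exact tendsto_atTop_add_const_right _ _
        (tendsto_natCast_atTop_atTop.const_mul_atTop (by linarith))
    exact (tendsto_gammaRatio_atTop (by positivity)).comp hx
  · refine .of_forall fun N k hk => ?_
    have hkN : (k : ℝ) + 1 ≤ N := by exact_mod_cast hk
    have hx : 0 < (b + 1) * (N : ℝ) + 1 - k := by nlinarith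
    rw [Real.norm_of_nonneg (gammaRatio_nonneg hx (by positivity))]
    exact gammaRatio_le_one hx (by positivity)

lemma qhat_div_mul_rpow {n L y : ℝ} (N : ℕ) (x : ℝ) (hy : 0 ≤ y) (hM : 0 < n + L + 1) :
    qhat n L N (y / (n + L + 1)) x * (y / (n + L + 1)) ^ L =
      y ^ L * (∑ k ∈ range (N + 1),
          gammaRatio (n + 1 - k) (L + k) * (y ^ k / Real.Gamma (k + (L + 1))) +
        gammaRatio (n + 1) L / (n * x - L) / Real.Gamma L) := by
  rw [qhat, qS, add_mul, mul_add, sum_mul, mul_sum, Real.div_rpow hy hM.le]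
  congr 1
  · refine sum_congr rfl fun k _ => ?_
    rw [gammaRatio, show n + 1 - k + (L + k) = n + L + 1 by ring,
      show L + n + 1 = n + L + 1 by ring, ← add_assoc, Real.rpow_add hM, Real.rpow_natCast,
      div_pow]
    ring
  · rw [gammaRatio, show n + 1 + L = n + L + 1 by ring, show L + n + 1 = n + L + 1 by ring]
    ring

lemma tendsto_one_add_div_rpow_neg_half {α : Type*} {l : Filter α} {f : α → ℝ}
    (hf : Tendsto f l atTop) (u : ℝ) :
    Tendsto (fun i => (1 + u / f i) ^ (-f i / 2)) l (𝓝 (Real.exp (-u / 2))) := by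
  have h := ((Real.tendsto_one_add_div_rpow_exp u).comp hf).rpow_const (p := -1 / 2)
    (Or.inl (Real.exp_pos u).ne')
  rw [← Real.exp_mul, mul_div, mul_neg_one] at h
  refine h.congr' ?_
  filter_upwards [hf.eventually_ge_atTop (|u| + 1)] with i hi
  have hfi : 0 < f i := by linarith [abs_nonneg u]
  have hbase : 0 ≤ 1 + u / f i := by
    rw [← neg_le_iff_add_nonneg', le_div_iff₀ hfi]
    linarith [neg_abs_le u]
  rw [Function.comp_apply, ← Real.rpow_mul hbase, mul_div, mul_neg_one]

lemma tendsto_pole_coefficient {α : Type*} {l : Filter α} {n : α → ℝ} {L c : ℝ}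
    (hL : 0 < L) (hc : c ≠ L) (hn : Tendsto n l atTop) :
    Tendsto (fun i => gammaRatio (n i + 1) L / (n i * (c / (n i + L + 1)) - L)) l
      (𝓝 (1 / (c - L))) := by
  have h_ratio := (tendsto_gammaRatio_atTop hL).comp (tendsto_atTop_add_const_right _ 1 hn)
  have h_frac := ((tendsto_add_div_add_atTop 0 (L + 1)).comp hn).const_mul c
  rw [mul_one] at h_frac
  refine h_ratio.div ((h_frac.sub_const L).congr fun i => ?_) (sub_ne_zero_of_ne hc)
  simp only [Function.comp_apply, add_zero]
  ring

theorem qhat_singular_origin_limit_general (L b : ℝ) (hL : 0 < L) (hb : 0 < b)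
    (s t χ : ℝ) (hs : 0 < s) (ht : 0 < t) (hχL : χ ^ 2 ≠ L) :
    Tendsto (fun N : ℕ =>
      let nN : ℝ := (b + 1) * N
      let δN : ℝ := (nN + L + 1) / N
      let zN : ℝ := s / Real.sqrt (N * δN)
      let wN : ℝ := t / Real.sqrt (N * δN)
      let lamN : ℝ := χ / Real.sqrt (N * δN)
      qhat nN L (N - 1) (zN * wN) (lamN ^ 2) * (zN * wN) ^ L *
        ((1 + zN ^ 2) * (1 + wN ^ 2)) ^ (-(nN + L + 1) / 2))
      atTop
      (nhds ((1 / (χ ^ 2 - L)) * (s * t) ^ L *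
        ((χ ^ 2 - L) * mittagLeffler1 (L + 1) (s * t) + 1 / Real.Gamma L) *
        Real.exp (-(s ^ 2 + t ^ 2) / 2))) := by
  have hn : Tendsto (fun N : ℕ => (b + 1) * (N : ℝ)) atTop atTop :=
    tendsto_natCast_atTop_atTop.const_mul_atTop (by linarith)
  have hM : Tendsto (fun N : ℕ => (b + 1) * (N : ℝ) + L + 1) atTop atTop := by
    simp_rw [add_assoc]
    exact tendsto_atTop_add_const_right _ _ hn
  have h_sum := tendsto_sum_range_gammaRatio_mul hL hb.le (s * t)
  have h_pole := (tendsto_pole_coefficient hL hχL hn).div_const (Real.Gamma L)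
  have h_weight := (tendsto_one_add_div_rpow_neg_half hM (s ^ 2)).mul
    (tendsto_one_add_div_rpow_neg_half hM (t ^ 2))
  have h_lim := ((h_sum.add h_pole).const_mul ((s * t) ^ L)).mul h_weight
  convert h_lim.congr' ?_ using 2
  · rw [← Real.exp_add]
    field_simp
    ring_nf
  · filter_upwards [eventually_ge_atTop 1] with N hN
    have hN0 : (N : ℝ) ≠ 0 := by positivity
    have hMN : 0 < (b + 1) * (N : ℝ) + L + 1 := by positivity
    have h_scale : (N : ℝ) * (((b + 1) * N + L + 1) / N) = (b + 1) * N + L + 1 := by field_simp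
    have h_sq : √((b + 1) * (N : ℝ) + L + 1) ^ 2 = (b + 1) * N + L + 1 := Real.sq_sqrt hMN.le
    simp only [h_scale, div_pow, h_sq, div_mul_div_comm, ← sq]
    rw [qhat_div_mul_rpow _ _ (by positivity) hMN, Nat.sub_add_cancel hN,
      Real.mul_rpow (x := 1 + s ^ 2 / _) (by positivity) (by positivity)]

/-- Singular-origin scaling limit of the weighted truncated sum `q̂ · ω̂` arising from
the induced spherical unitary ensemble with a fixed insertion parameter `L`. -/
theorem qhat_singular_origin_limit (L b : ℝ) (hL : 0 < L) (hb : 0 < b)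
    (s t χ : ℝ) (hs : 0 < s) (ht : 0 < t) (hχ : 0 < χ) (hχL : χ ^ 2 ≠ L) :
    Tendsto (fun N : ℕ =>
      let nN : ℝ := (b + 1) * N
      let δN : ℝ := (nN + L + 1) / N
      let zN : ℝ := s / Real.sqrt (N * δN)
      let wN : ℝ := t / Real.sqrt (N * δN)
      let lamN : ℝ := χ / Real.sqrt (N * δN)
      qhat nN L (N - 1) (zN * wN) (lamN ^ 2) * (zN * wN) ^ L *
        ((1 + zN ^ 2) * (1 + wN ^ 2)) ^ (-(nN + L + 1) / 2))
      atTop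
      (nhds ((1 / (χ ^ 2 - L)) * (s * t) ^ L *
        ((χ ^ 2 - L) * mittagLeffler1 (L + 1) (s * t) + 1 / Real.Gamma L) *
        Real.exp (-(s ^ 2 + t ^ 2) / 2))) :=
  qhat_singular_origin_limit_general L b hL hb s t χ hs ht hχL
end
end
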